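/- Let G be a finite simple graph of order n with at least one edge whose independence number satisfies β(G) = k, where k is an integer with 2 ≤ k ≤ ⌈n/2⌉. Then str(G) = 2n − 2β(G) + 1 if and only if the complement of G contains F_{2k−1} as a subgraph. -/

import Mathlib

open SimpleGraph

/-- The strength of a numbering `f` of a graph `G` on `Fin n`: the maximum value of
`(f u + 1) + (f v + 1)` over edges `uv` of `G` (labels are the 1-based values `f · + 1`). -/
noncomputable def strOf {n : ℕ} (G : SimpleGraph (Fin n)) (f : Fin n ≃ Fin n) : ℕ :=
  sSup {s | ∃ u v, G.Adj u v ∧ s = ((f u : ℕ) + 1) + ((f v : ℕ) + 1)}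

/-- The strength of a graph `G` on `Fin n`: the minimum over all numberings
(bijections `Fin n ≃ Fin n`) of the maximum edge label. -/
noncomputable def str {n : ℕ} (G : SimpleGraph (Fin n)) : ℕ :=
  sInf {s | ∃ f : Fin n ≃ Fin n, s = strOf G f}

/-- The domination number: minimum size of a set `S` such that every vertex not
in `S` is adjacent to some vertex of `S`. -/
noncomputable def dominationNumber {n : ℕ} (G : SimpleGraph (Fin n)) : ℕ :=
  sInf {k | ∃ S : Finset (Fin n), (∀ v ∉ S, ∃ u ∈ S, G.Adj u v) ∧ S.card = k}

/-- The independence number: maximum size of a set of pairwise non-adjacent vertices. -/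
noncomputable def indepNumber {n : ℕ} (G : SimpleGraph (Fin n)) : ℕ :=
  sSup {k | ∃ S : Finset (Fin n), (∀ u ∈ S, ∀ v ∈ S, u ≠ v → ¬ G.Adj u v) ∧ S.card = k}

/-- The vertex covering number: minimum size of a set of vertices meeting every edge. -/
noncomputable def vertexCoverNumber {n : ℕ} (G : SimpleGraph (Fin n)) : ℕ :=
  sInf {k | ∃ S : Finset (Fin n), (∀ u v, G.Adj u v → u ∈ S ∨ v ∈ S) ∧ S.card = k}

/-- The edge covering number: minimum size of a set of edges covering every vertex. -/
noncomputable def edgeCoverNumber {n : ℕ} (G : SimpleGraph (Fin n)) : ℕ :=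
  sInf {k | ∃ E : Finset (Sym2 (Fin n)),
    (∀ e ∈ E, e ∈ G.edgeSet) ∧ (∀ v : Fin n, ∃ e ∈ E, v ∈ e) ∧ E.card = k}

/-- The matching (edge independence) number: maximum size of a set of pairwise
non-incident edges. -/
noncomputable def matchingNumber {n : ℕ} (G : SimpleGraph (Fin n)) : ℕ :=
  sSup {k | ∃ M : Finset (Sym2 (Fin n)),
    (∀ e ∈ M, e ∈ G.edgeSet) ∧
    (∀ e ∈ M, ∀ e' ∈ M, e ≠ e' → ∀ v : Fin n, v ∈ e → v ∉ e') ∧ M.card = k}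

/-- The graph `F_k` on vertices `v_1, …, v_k` (here `v_i` is `⟨i-1, _⟩ : Fin k`), with
`v_i` adjacent to `v_j` iff `1 ≤ i ≤ ⌊k/2⌋` and `i + 1 ≤ j ≤ k + 1 - i`. -/
noncomputable def Fgraph (k : ℕ) : SimpleGraph (Fin k) :=
  SimpleGraph.fromRel (fun a b =>
    (a : ℕ) + 1 ≤ k / 2 ∧ (a : ℕ) + 2 ≤ (b : ℕ) + 1 ∧ (b : ℕ) + 1 ≤ k + 1 - ((a : ℕ) + 1))

/-- `G` contains `F_k` as a subgraph: there is an injective graph homomorphism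
from `F_k` into `G`. -/
noncomputable def ContainsF {n : ℕ} (G : SimpleGraph (Fin n)) (k : ℕ) : Prop :=
  ∃ φ : Fgraph k →g G, Function.Injective φ

/-!
Among the `β + 1` vertices carrying the largest labels some two are adjacent, and two distinct
labels from the top `β + 1` sum to at least `2n - 2β + 1`; so every numbering has strength at
least `2n - 2β + 1`. A numbering has strength at most `2n - m` exactly when no edge joins the
vertices labelled `n - a` and `n - b` with `a + b < m` (two labels can only sum beyond `2n - m`
if both lie among the top `m`), i.e. when these top `m` vertices span a copy of `F_m` in the
complement. Conversely a copy of `F_m` in `Gᶜ` can be labelled this way and the numbering extended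
arbitrarily. Take `m = 2β - 1`.
-/

open Finset

section Strength

variable {n : ℕ} (G : SimpleGraph (Fin n))

lemma strOf_le_iff (f : Fin n ≃ Fin n) {B : ℕ} :
    strOf G f ≤ B ↔ ∀ u v, G.Adj u v → ((f u : ℕ) + 1) + ((f v : ℕ) + 1) ≤ B := by
  have hbdd : BddAbove {s | ∃ u v, G.Adj u v ∧ s = ((f u : ℕ) + 1) + ((f v : ℕ) + 1)} :=
    ⟨2 * n, by rintro _ ⟨u, v, -, rfl⟩; omega⟩
  refine ⟨fun h u v huv => (le_csSup hbdd ⟨u, v, huv, rfl⟩).trans h, fun h => csSup_le' ?_⟩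
  rintro _ ⟨u, v, huv, rfl⟩
  exact h u v huv

lemma str_le_iff {B : ℕ} : str G ≤ B ↔ ∃ f, strOf G f ≤ B := by
  let S := {s | ∃ f : Fin n ≃ Fin n, s = strOf G f}
  obtain ⟨f, hf⟩ : sInf S ∈ S := Nat.sInf_mem ⟨_, Equiv.refl _, rfl⟩
  refine ⟨fun h => ⟨f, hf.symm.trans_le h⟩, ?_⟩
  rintro ⟨g, hg⟩
  exact (Nat.sInf_le (s := S) ⟨g, rfl⟩).trans hg

lemma card_le_indepNumber {S : Finset (Fin n)} (hS : ∀ u ∈ S, ∀ v ∈ S, u ≠ v → ¬ G.Adj u v) :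
    #S ≤ indepNumber G :=
  le_csSup ⟨n, by rintro _ ⟨T, -, rfl⟩; simpa using T.card_le_univ⟩ ⟨S, hS, rfl⟩

lemma exists_adj_of_indepNumber_lt_card {S : Finset (Fin n)} (h : indepNumber G < #S) :
    ∃ u ∈ S, ∃ v ∈ S, G.Adj u v := by
  by_contra! hS
  exact (card_le_indepNumber G fun u hu v hv _ => hS u hu v hv).not_gt h

lemma two_mul_sub_two_mul_indepNumber_lt_strOf (hβ : indepNumber G < n) (f : Fin n ≃ Fin n) :
    2 * n - 2 * indepNumber G < strOf G f := by
  let c : Fin n := ⟨n - (indepNumber G + 1), by omega⟩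
  obtain ⟨u, hu, v, hv, huv⟩ :=
    exists_adj_of_indepNumber_lt_card G (S := (Ici c).map f.symm.toEmbedding) (by simp only [card_map, Fin.card_Ici, c]; omega)
  simp only [mem_map_equiv, Equiv.symm_symm, mem_Ici, Fin.le_def, c] at hu hv
  have hne : (f u : ℕ) ≠ f v := Fin.val_injective.ne (f.injective.ne huv.ne)
  have := (strOf_le_iff G f).1 le_rfl u v huv
  omega

lemma two_mul_sub_two_mul_indepNumber_lt_str (hβ : indepNumber G < n) :
    2 * n - 2 * indepNumber G < str G :=
  lt_of_not_ge fun h =>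
    let ⟨f, hf⟩ := (str_le_iff G).1 h
    (two_mul_sub_two_mul_indepNumber_lt_strOf G hβ f).not_ge hf

lemma fgraph_adj {m : ℕ} {a b : Fin m} : (Fgraph m).Adj a b ↔ a ≠ b ∧ (a : ℕ) + b < m := by
  rw [Fgraph, fromRel_adj, Ne, ← Fin.val_inj]
  omega

lemma containsF_compl_iff {m : ℕ} : ContainsF Gᶜ m ↔ ∃ φ : Fin m → Fin n,
    Function.Injective φ ∧ ∀ a b : Fin m, (a : ℕ) + b < m → ¬ G.Adj (φ a) (φ b) := by
  constructor
  · rintro ⟨φ, hφ⟩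
    refine ⟨φ, hφ, fun a b hab hadj => ?_⟩
    have hne : a ≠ b := by rintro rfl; exact G.irrefl hadj
    exact ((compl_adj G _ _).1 (φ.map_adj (fgraph_adj.2 ⟨hne, hab⟩))).2 hadj
  · rintro ⟨φ, hφ, h⟩
    refine ⟨⟨φ, fun {a b} hab => ?_⟩, hφ⟩
    obtain ⟨hne, hab⟩ := fgraph_adj.1 hab
    exact (compl_adj G _ _).2 ⟨hφ.ne hne, h a b hab⟩

lemma strOf_le_two_mul_sub_iff {m : ℕ} (hm : m ≤ n) (f : Fin n ≃ Fin n) :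
    strOf G f ≤ 2 * n - m ↔ ∀ a b : Fin m, (a : ℕ) + b < m →
      ¬ G.Adj (f.symm (Fin.castLE hm a).rev) (f.symm (Fin.castLE hm b).rev) := by
  rw [strOf_le_iff]
  constructor
  · intro h a b hab hadj
    have := h _ _ hadj
    simp only [Equiv.apply_symm_apply, Fin.val_rev, Fin.val_castLE] at this
    omega
  · intro h u v huv
    by_contra hlt
    have hlabel (w) (hw : n - m ≤ (f w : ℕ)) :
        f.symm (Fin.castLE hm ⟨n - 1 - f w, by have := (f w).isLt; omega⟩).rev = w := by
      rw [Equiv.symm_apply_eq]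
      ext
      simp only [Fin.val_rev, Fin.val_castLE]
      have := (f w).isLt
      omega
    have := (f u).isLt
    have := (f v).isLt
    refine h ⟨n - 1 - f u, by omega⟩ ⟨n - 1 - f v, by omega⟩ (by simp only; omega) ?_
    rwa [hlabel u (by omega), hlabel v (by omega)]

lemma exists_strOf_le_iff_containsF_compl {m : ℕ} (hm : m ≤ n) :
    (∃ f, strOf G f ≤ 2 * n - m) ↔ ContainsF Gᶜ m := by
  classical
  simp_rw [strOf_le_two_mul_sub_iff G hm, containsF_compl_iff]
  have hψ : Function.Injective fun a : Fin m => (Fin.castLE hm a).rev :=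
    Fin.rev_injective.comp (Fin.castLE_injective hm)
  constructor
  · rintro ⟨f, hf⟩
    exact ⟨_, f.symm.injective.comp hψ, hf⟩
  · rintro ⟨φ, hφ, h⟩
    let g : Equiv.Perm (Fin n) :=
      ((Equiv.ofInjective _ hψ).symm.trans (Equiv.ofInjective φ hφ)).extendSubtype
    have hg : ∀ a, g (Fin.castLE hm a).rev = φ a := fun a => by
      rw [Equiv.extendSubtype_apply_of_mem _ _ ⟨a, rfl⟩]
      simp [Equiv.ofInjective_symm_apply]
    exact ⟨g.symm, by simpa only [Equiv.symm_symm, hg] using h⟩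

end Strength

theorem strength_eq_indep_iff_general (n k : ℕ) (G : SimpleGraph (Fin n))
    (hβ : indepNumber G = k)
    (hk₁ : 2 ≤ k) (hk₂ : k ≤ (n + 1) / 2) :
    str G = 2 * n - 2 * indepNumber G + 1 ↔ ContainsF Gᶜ (2 * k - 1) := by
  subst hβ
  have hlow := two_mul_sub_two_mul_indepNumber_lt_str G (by omega)
  rw [← exists_strOf_le_iff_containsF_compl G (by omega), ← str_le_iff]
  constructor <;> intro <;> omega

/-- For a graph `G` of order `n` with at least one edge and independence number
`β(G) = k` where `2 ≤ k ≤ ⌈n/2⌉`, `str(G) = 2n - 2β(G) + 1` iff the complement of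
`G` contains `F_{2k-1}` as a subgraph. -/
theorem strength_eq_indep_iff (n k : ℕ) (G : SimpleGraph (Fin n))
    (hE : G.edgeSet.Nonempty) (hβ : indepNumber G = k)
    (hk₁ : 2 ≤ k) (hk₂ : k ≤ (n + 1) / 2) :
    str G = 2 * n - 2 * indepNumber G + 1 ↔ ContainsF Gᶜ (2 * k - 1) :=
  strength_eq_indep_iff_general n k G hβ hk₁ hk₂
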